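/- Let L be an e-cyclic residuated lattice and let (H_i)_{i ∈ I} be a family of normal convex subalgebras of L. Then C[⋃_{i ∈ I} H_i], the join of the H_i in the lattice of convex subalgebras of L, is a normal convex subalgebra of L. (Hence the lattice of normal convex subalgebras is a complete sublattice of the lattice of convex subalgebras.) -/

import Mathlib

/-!
In an e-cyclic residuated lattice, `C[S]` is the union of the intervals `[a, a \ e]`, where `a`
runs through the submonoid generated by the negative elements `|s|`, `s ∈ S`: if `x ∈ [a, a \ e]`
and `y ∈ [b, b \ e]`, then each operation applied to `x, y` lands in `[c, c \ e]` for
`c = a b (b a)`, e-cyclicity being what makes the residuals behave.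

The conjugations `λ_y x = y \ (x y) ∧ e` and `ρ_y x = (y x) / y ∧ e` are monotone, fix `e` and are
supermultiplicative, so a lower bound inside the submonoid on its generators propagates to the
whole submonoid and from there to `C[⋃ H_i]`. On the generators `|s|` it is supplied by the
normality of the `H_i`.
-/

universe u

/-- A residuated lattice: a lattice-ordered monoid with left and right residuals.
`ldiv x z` is `x \ z` and `rdiv z y` is `z / y`. -/
class ResiduatedLattice (α : Type u) extends Lattice α, Monoid α where
  ldiv : α → α → α
  rdiv : α → α → α
  mul_le_iff_le_ldiv : ∀ x y z : α, x * y ≤ z ↔ y ≤ ldiv x z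
  mul_le_iff_le_rdiv : ∀ x y z : α, x * y ≤ z ↔ x ≤ rdiv z y

namespace ResiduatedLattice

variable {α : Type u} [ResiduatedLattice α]

/-- `L` is e-cyclic if `x \ e = e / x` for all `x`. -/
def ECyclic (α : Type u) [ResiduatedLattice α] : Prop :=
  ∀ x : α, ldiv x 1 = rdiv 1 x

/-- Absolute value: `|x| = x ⊓ (e / x) ⊓ e`. -/
def absv (x : α) : α := x ⊓ rdiv 1 x ⊓ 1

/-- A convex subalgebra: contains `e`, closed under all the operations, and order-convex. -/
structure IsConvexSubalgebra (H : Set α) : Prop where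
  one_mem : (1 : α) ∈ H
  mul_mem : ∀ ⦃x⦄, x ∈ H → ∀ ⦃y⦄, y ∈ H → x * y ∈ H
  sup_mem : ∀ ⦃x⦄, x ∈ H → ∀ ⦃y⦄, y ∈ H → x ⊔ y ∈ H
  inf_mem : ∀ ⦃x⦄, x ∈ H → ∀ ⦃y⦄, y ∈ H → x ⊓ y ∈ H
  ldiv_mem : ∀ ⦃x⦄, x ∈ H → ∀ ⦃y⦄, y ∈ H → ldiv x y ∈ H
  rdiv_mem : ∀ ⦃x⦄, x ∈ H → ∀ ⦃y⦄, y ∈ H → rdiv x y ∈ H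
  convex : ∀ ⦃a⦄, a ∈ H → ∀ ⦃b⦄, b ∈ H → ∀ ⦃x⦄, a ≤ x → x ≤ b → x ∈ H

/-- `C[S]`: the smallest convex subalgebra containing `S`. -/
def convexClosure (S : Set α) : Set α :=
  ⋂₀ {H : Set α | IsConvexSubalgebra H ∧ S ⊆ H}

end ResiduatedLattice

open ResiduatedLattice

/-- A convex subalgebra is normal if it is closed under conjugation. -/
def IsNormal {α : Type u} [ResiduatedLattice α] (H : Set α) : Prop :=
  ∀ x ∈ H, ∀ y : α, ldiv y (x * y) ⊓ 1 ∈ H ∧ rdiv (y * x) y ⊓ 1 ∈ H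

namespace ResiduatedLattice

variable {α : Type u} [ResiduatedLattice α]

open Set

theorem le_ldiv_iff {x y z : α} : y ≤ ldiv x z ↔ x * y ≤ z := (mul_le_iff_le_ldiv x y z).symm

theorem le_rdiv_iff {x y z : α} : x ≤ rdiv z y ↔ x * y ≤ z := (mul_le_iff_le_rdiv x y z).symm

theorem mul_ldiv_le (x z : α) : x * ldiv x z ≤ z := le_ldiv_iff.1 le_rfl

theorem rdiv_mul_le (z y : α) : rdiv z y * y ≤ z := le_rdiv_iff.1 le_rfl

instance : MulLeftMono α :=
  ⟨fun _ _ _ h => le_ldiv_iff.1 (h.trans (le_ldiv_iff.2 le_rfl))⟩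

instance : MulRightMono α :=
  ⟨fun _ _ _ h => le_rdiv_iff.1 (h.trans (le_rdiv_iff.2 le_rfl))⟩

theorem ldiv_le_ldiv {x x' z z' : α} (hx : x' ≤ x) (hz : z ≤ z') : ldiv x z ≤ ldiv x' z' :=
  le_ldiv_iff.2 (((mul_le_mul_left hx _).trans (mul_ldiv_le x z)).trans hz)

theorem ECyclic.le_ldiv_one_iff (hec : ECyclic α) {a x : α} : x ≤ ldiv a 1 ↔ x * a ≤ 1 := by
  rw [hec, le_rdiv_iff]

theorem absv_le_self (x : α) : absv x ≤ x := inf_le_left.trans inf_le_left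

theorem absv_le_one (x : α) : absv x ≤ 1 := inf_le_right

theorem IsConvexSubalgebra.absv_mem {K : Set α} (hK : IsConvexSubalgebra K) {x : α}
    (hx : x ∈ K) : absv x ∈ K :=
  hK.inf_mem (hK.inf_mem hx (hK.rdiv_mem hK.one_mem hx)) hK.one_mem

def IsConvexSubalgebra.toSubmonoid {K : Set α} (hK : IsConvexSubalgebra K) : Submonoid α where
  carrier := K
  mul_mem' := fun hx hy => hK.mul_mem hx hy
  one_mem' := hK.one_mem

theorem le_one_of_mem_closure {s : Set α} (hs : ∀ a ∈ s, a ≤ 1) {a : α}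
    (ha : a ∈ Submonoid.closure s) : a ≤ 1 := by
  induction ha using Submonoid.closure_induction with
  | mem a ha => exact hs a ha
  | one => exact le_rfl
  | mul _ _ _ _ hx hy => exact Left.mul_le_one hx hy

theorem absv_mem_Icc (x : α) : x ∈ Icc (absv x) (ldiv (absv x) 1) :=
  ⟨absv_le_self x, le_ldiv_iff.2 (le_rdiv_iff.1 (inf_le_left.trans inf_le_right))⟩

theorem mem_Icc_ldiv_one {b z : α} (hb : b ≤ 1) (hbz : b ≤ z) (hz : z ≤ 1) :
    z ∈ Icc b (ldiv b 1) :=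
  ⟨hbz, hz.trans (le_ldiv_iff.2 (by rwa [mul_one]))⟩

theorem Icc_ldiv_one_subset {a c : α} (h : c ≤ a) : Icc a (ldiv a 1) ⊆ Icc c (ldiv c 1) :=
  Icc_subset_Icc h (ldiv_le_ldiv h le_rfl)

section Operations

variable {a b c x y : α} (hx : x ∈ Icc a (ldiv a 1)) (hy : y ∈ Icc b (ldiv b 1))
include hx hy

theorem sup_mem_Icc_ldiv_one (hca : c ≤ a) (hcb : c ≤ b) : x ⊔ y ∈ Icc c (ldiv c 1) :=
  have hx := Icc_ldiv_one_subset hca hx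
  have hy := Icc_ldiv_one_subset hcb hy
  ⟨le_sup_of_le_left hx.1, sup_le hx.2 hy.2⟩

theorem inf_mem_Icc_ldiv_one (hca : c ≤ a) (hcb : c ≤ b) : x ⊓ y ∈ Icc c (ldiv c 1) :=
  have hx := Icc_ldiv_one_subset hca hx
  have hy := Icc_ldiv_one_subset hcb hy
  ⟨le_inf hx.1 hy.1, inf_le_of_left_le hx.2⟩

variable (hab : c ≤ a * b) (hba : c ≤ b * a)
include hab hba

theorem mul_mem_Icc_ldiv_one : x * y ∈ Icc c (ldiv c 1) := by
  refine ⟨hab.trans (mul_le_mul' hx.1 hy.1), le_ldiv_iff.2 ?_⟩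
  calc c * (x * y) ≤ b * (a * x) * y := by
        simpa only [mul_assoc] using mul_le_mul_left hba (x * y)
    _ ≤ b * 1 * y := mul_le_mul_left (mul_le_mul_right (le_ldiv_iff.1 hx.2) b) y
    _ ≤ 1 := by simpa only [mul_one] using le_ldiv_iff.1 hy.2

theorem ldiv_mem_Icc_ldiv_one (hec : ECyclic α) : ldiv x y ∈ Icc c (ldiv c 1) := by
  refine ⟨le_ldiv_iff.2 ?_, le_ldiv_iff.2 ?_⟩
  · calc x * c ≤ x * a * b := by simpa only [mul_assoc] using mul_le_mul_right hab x
      _ ≤ b := mul_le_of_le_one_left' (hec.le_ldiv_one_iff.1 hx.2)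
      _ ≤ y := hy.1
  · calc c * ldiv x y ≤ b * (a * ldiv x y) := by
          simpa only [mul_assoc] using mul_le_mul_left hba (ldiv x y)
      _ ≤ b * y := mul_le_mul_right ((mul_le_mul_left hx.1 _).trans (mul_ldiv_le x y)) b
      _ ≤ 1 := le_ldiv_iff.1 hy.2

theorem rdiv_mem_Icc_ldiv_one (hec : ECyclic α) : rdiv x y ∈ Icc c (ldiv c 1) := by
  refine ⟨le_rdiv_iff.2 ?_, hec.le_ldiv_one_iff.2 ?_⟩
  · calc c * y ≤ a * (b * y) := by simpa only [mul_assoc] using mul_le_mul_left hab y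
      _ ≤ a := mul_le_of_le_one_right' (le_ldiv_iff.1 hy.2)
      _ ≤ x := hx.1
  · calc rdiv x y * c ≤ rdiv x y * b * a := by
          simpa only [mul_assoc] using mul_le_mul_right hba (rdiv x y)
      _ ≤ x * a := mul_le_mul_left ((mul_le_mul_right hy.1 _).trans (rdiv_mul_le x y)) a
      _ ≤ 1 := hec.le_ldiv_one_iff.1 hx.2

end Operations

def boundedBy (M : Submonoid α) : Set α := {x | ∃ a ∈ M, x ∈ Icc a (ldiv a 1)}

section BoundedBy

variable {M : Submonoid α}

/-- The witness `a b (b a)` lies below both `a b` and `b a`, which is all the interval lemmas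
above ask of it. -/
theorem op_mem_boundedBy (hM : ∀ a ∈ M, a ≤ 1) {op : α → α → α}
    (hop : ∀ {a b c x y : α}, a ≤ 1 → b ≤ 1 → c ≤ a * b → c ≤ b * a →
      x ∈ Icc a (ldiv a 1) → y ∈ Icc b (ldiv b 1) → op x y ∈ Icc c (ldiv c 1))
    {x y : α} (hx : x ∈ boundedBy M) (hy : y ∈ boundedBy M) : op x y ∈ boundedBy M := by
  obtain ⟨a, ha, hxa⟩ := hx
  obtain ⟨b, hb, hyb⟩ := hy
  exact ⟨a * b * (b * a), M.mul_mem (M.mul_mem ha hb) (M.mul_mem hb ha),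
    hop (hM a ha) (hM b hb) (mul_le_of_le_one_right' (hM _ (M.mul_mem hb ha)))
      (mul_le_of_le_one_left' (hM _ (M.mul_mem ha hb))) hxa hyb⟩

theorem isConvexSubalgebra_boundedBy (hec : ECyclic α) (hM : ∀ a ∈ M, a ≤ 1) :
    IsConvexSubalgebra (boundedBy M) where
  one_mem := ⟨1, M.one_mem, mem_Icc_ldiv_one le_rfl le_rfl le_rfl⟩
  mul_mem _ hx _ hy := op_mem_boundedBy hM
    (fun _ _ hab hba h₁ h₂ => mul_mem_Icc_ldiv_one h₁ h₂ hab hba) hx hy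
  sup_mem _ hx _ hy := op_mem_boundedBy hM (fun ha hb hab hba h₁ h₂ =>
    sup_mem_Icc_ldiv_one h₁ h₂ (hab.trans (mul_le_of_le_one_right' hb))
      (hba.trans (mul_le_of_le_one_right' ha))) hx hy
  inf_mem _ hx _ hy := op_mem_boundedBy hM (fun ha hb hab hba h₁ h₂ =>
    inf_mem_Icc_ldiv_one h₁ h₂ (hab.trans (mul_le_of_le_one_right' hb))
      (hba.trans (mul_le_of_le_one_right' ha))) hx hy
  ldiv_mem _ hx _ hy := op_mem_boundedBy hM
    (fun _ _ hab hba h₁ h₂ => ldiv_mem_Icc_ldiv_one h₁ h₂ hab hba hec) hx hy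
  rdiv_mem _ hx _ hy := op_mem_boundedBy hM
    (fun _ _ hab hba h₁ h₂ => rdiv_mem_Icc_ldiv_one h₁ h₂ hab hba hec) hx hy
  convex := by
    rintro x ⟨a, ha, hxa⟩ y ⟨b, hb, hyb⟩ z hxz hzy
    have hxa := Icc_ldiv_one_subset (mul_le_of_le_one_right' (hM b hb)) hxa
    have hyb := Icc_ldiv_one_subset (mul_le_of_le_one_left' (hM a ha)) hyb
    exact ⟨a * b, M.mul_mem ha hb, hxa.1.trans hxz, hzy.trans hyb.2⟩

theorem boundedBy_subset {K : Set α} (hK : IsConvexSubalgebra K) (hMK : (M : Set α) ⊆ K) :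
    boundedBy M ⊆ K := fun _ ⟨_, ha, hx⟩ =>
  hK.convex (hMK ha) (hK.ldiv_mem (hMK ha) hK.one_mem) hx.1 hx.2

theorem convexClosure_eq_boundedBy (hec : ECyclic α) (S : Set α) :
    convexClosure S = boundedBy (Submonoid.closure (absv '' S)) := by
  refine subset_antisymm (sInter_subset_of_mem ⟨?_, fun s hs => ?_⟩)
    (subset_sInter fun K ⟨hK, hSK⟩ => boundedBy_subset hK ?_)
  · exact isConvexSubalgebra_boundedBy hec fun _ =>
      le_one_of_mem_closure (forall_mem_image.2 fun x _ => absv_le_one x)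
  · exact ⟨absv s, Submonoid.subset_closure (mem_image_of_mem absv hs), absv_mem_Icc s⟩
  · exact (Submonoid.closure_le (S := hK.toSubmonoid)).2
      (image_subset_iff.2 fun s hs => hK.absv_mem (hSK hs))

end BoundedBy

def lconj (y x : α) : α := ldiv y (x * y) ⊓ 1

def rconj (y x : α) : α := rdiv (y * x) y ⊓ 1

theorem lconj_le_ldiv (y x : α) : lconj y x ≤ ldiv y (x * y) := inf_le_left

theorem rconj_le_rdiv (y x : α) : rconj y x ≤ rdiv (y * x) y := inf_le_left

theorem lconj_le_one (y x : α) : lconj y x ≤ 1 := inf_le_right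

theorem rconj_le_one (y x : α) : rconj y x ≤ 1 := inf_le_right

theorem lconj_one (y : α) : lconj y 1 = 1 :=
  inf_eq_right.2 (le_ldiv_iff.2 (by rw [one_mul, mul_one]))

theorem rconj_one (y : α) : rconj y 1 = 1 :=
  inf_eq_right.2 (le_rdiv_iff.2 (by rw [one_mul, mul_one]))

theorem lconj_mono (y : α) : Monotone (lconj y) := fun _ _ h =>
  inf_le_inf_right 1 (ldiv_le_ldiv le_rfl (mul_le_mul_left h y))

theorem rconj_mono (y : α) : Monotone (rconj y) := fun _ _ h =>
  inf_le_inf_right 1 (le_rdiv_iff.2 ((rdiv_mul_le _ y).trans (mul_le_mul_right h y)))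

theorem lconj_mul_le (y a b : α) : lconj y a * lconj y b ≤ lconj y (a * b) := by
  refine le_inf (le_ldiv_iff.2 ?_) (Left.mul_le_one (lconj_le_one y a) (lconj_le_one y b))
  calc y * (lconj y a * lconj y b) ≤ y * ldiv y (a * y) * lconj y b := by
        rw [← mul_assoc]; exact mul_le_mul_left (mul_le_mul_right (lconj_le_ldiv y a) y) _
    _ ≤ a * (y * ldiv y (b * y)) := by
        simpa only [mul_assoc] using mul_le_mul' (mul_ldiv_le y (a * y)) (lconj_le_ldiv y b)
    _ ≤ a * b * y := by
        simpa only [mul_assoc] using mul_le_mul_right (mul_ldiv_le y (b * y)) a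

theorem rconj_mul_le (y a b : α) : rconj y a * rconj y b ≤ rconj y (a * b) := by
  refine le_inf (le_rdiv_iff.2 ?_) (Left.mul_le_one (rconj_le_one y a) (rconj_le_one y b))
  calc rconj y a * rconj y b * y ≤ rconj y a * (rdiv (y * b) y * y) := by
        rw [mul_assoc]; exact mul_le_mul_right (mul_le_mul_left (rconj_le_rdiv y b) y) _
    _ ≤ rdiv (y * a) y * y * b := by
        simpa only [mul_assoc] using mul_le_mul' (rconj_le_rdiv y a) (rdiv_mul_le (y * b) y)
    _ ≤ y * (a * b) := by
        simpa only [mul_assoc] using mul_le_mul_left (rdiv_mul_le (y * a) y) b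

theorem exists_mem_closure_le_of_mul_le {s : Set α} {f : α → α} (hf1 : 1 ≤ f 1)
    (hf : ∀ a b, f a * f b ≤ f (a * b)) (hs : ∀ g ∈ s, ∃ b ∈ Submonoid.closure s, b ≤ f g)
    {a : α} (ha : a ∈ Submonoid.closure s) : ∃ b ∈ Submonoid.closure s, b ≤ f a := by
  induction ha using Submonoid.closure_induction with
  | mem g hg => exact hs g hg
  | one => exact ⟨1, Submonoid.one_mem _, hf1⟩
  | mul a₁ a₂ _ _ h₁ h₂ =>
    obtain ⟨b₁, hb₁, hb₁a⟩ := h₁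
    obtain ⟨b₂, hb₂, hb₂a⟩ := h₂
    exact ⟨b₁ * b₂, Submonoid.mul_mem _ hb₁ hb₂, (mul_le_mul' hb₁a hb₂a).trans (hf a₁ a₂)⟩

theorem isNormal_boundedBy {M : Submonoid α} (hM : ∀ a ∈ M, a ≤ 1)
    (hl : ∀ y, ∀ a ∈ M, ∃ b ∈ M, b ≤ lconj y a) (hr : ∀ y, ∀ a ∈ M, ∃ b ∈ M, b ≤ rconj y a) :
    IsNormal (boundedBy M) := by
  rintro x ⟨a, ha, hxa⟩ y
  obtain ⟨b, hb, hba⟩ := hl y a ha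
  obtain ⟨c, hc, hca⟩ := hr y a ha
  exact ⟨⟨b, hb, mem_Icc_ldiv_one (hM b hb) (hba.trans (lconj_mono y hxa.1)) (lconj_le_one y x)⟩,
    ⟨c, hc, mem_Icc_ldiv_one (hM c hc) (hca.trans (rconj_mono y hxa.1)) (rconj_le_one y x)⟩⟩

theorem exists_absv_le_of_mapsTo {ι : Type*} {H : ι → Set α}
    (hH : ∀ i, IsConvexSubalgebra (H i)) {f : α → α} (hf : ∀ i, MapsTo f (H i) (H i)) :
    ∀ g ∈ absv '' ⋃ i, H i, ∃ b ∈ Submonoid.closure (absv '' ⋃ i, H i), b ≤ f g := by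
  rintro _ ⟨s, hs, rfl⟩
  obtain ⟨i, hi⟩ := mem_iUnion.1 hs
  exact ⟨absv (f (absv s)), Submonoid.subset_closure
    (mem_image_of_mem absv (mem_iUnion.2 ⟨i, hf i ((hH i).absv_mem hi)⟩)), absv_le_self _⟩

end ResiduatedLattice

/-- the join of a family of normal convex subalgebras in the lattice of
convex subalgebras is a normal convex subalgebra. -/
theorem stmt16 {α : Type u} [ResiduatedLattice α] {ι : Type*} (hec : ECyclic α)
    (H : ι → Set α) (hH : ∀ i, IsConvexSubalgebra (H i)) (hN : ∀ i, IsNormal (H i)) :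
    IsConvexSubalgebra (convexClosure (⋃ i, H i)) ∧
    IsNormal (convexClosure (⋃ i, H i)) := by
  have hM : ∀ a ∈ Submonoid.closure (absv '' ⋃ i, H i), a ≤ 1 := fun _ =>
    le_one_of_mem_closure (Set.forall_mem_image.2 fun x _ => absv_le_one x)
  rw [convexClosure_eq_boundedBy hec]
  refine ⟨isConvexSubalgebra_boundedBy hec hM, isNormal_boundedBy hM (fun y _ => ?_)
    (fun y _ => ?_)⟩
  · exact exists_mem_closure_le_of_mul_le (lconj_one y).ge (lconj_mul_le y)
      (exists_absv_le_of_mapsTo hH fun i x hx => (hN i x hx y).1)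
  · exact exists_mem_closure_le_of_mul_le (rconj_one y).ge (rconj_mul_le y)
      (exists_absv_le_of_mapsTo hH fun i x hx => (hN i x hx y).2)
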